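/- arXiv:1910.05089 — 3 statements merged into one kernel-verified Lean document; each statement's English description precedes it below -/
import Mathlib

section
/- For a linear map L on a finite-dimensional space with dim C = ℓ, the condition 'Δ ∘ L^n ∘ Δ⊥ ∘ L^{n'} ∘ Δ = 0 for all n, n' ∈ ℕ' holds if and only if L_pc ∘ L_cc^j ∘ L_cp = 0 for all j ∈ {0, 1, …, ℓ − 1}. -/
/-!
Write `f = 1 - e`. Inserting `1 = e + f` after the first factor of `L ^ (m + 1)` gives
`f L^{m+1} e = (f L e)(e L^m e) + (f L f)(f L^m e)`, and mirror-wise for `e L^{n+1} f`. Unwinding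
these recursions, every `e L^n f L^m e` is a sum of terms each containing some
`e L f (f L f)^k f L e` as a factor, and conversely each of these is a combination of
`e L^n f L^m e`'s. Finally `f L f` leaves `range f` invariant, and Cayley–Hamilton for its
restriction, an endomorphism of an `ℓ`-dimensional space, writes every power `(f L f)^k f` as a
combination of the powers `(f L f)^i f` with `i < ℓ`.
-/

open Polynomial Module

namespace IsIdempotentElem

variable {R : Type*} [Ring R] {e : R}

theorem mul_eq_mul_mul_add_mul_mul (he : IsIdempotentElem e) (x y : R) :
    x * y = x * e * (e * y) + x * (1 - e) * ((1 - e) * y) := by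
  rw [← mul_assoc, he.mul_mul_self, ← mul_assoc, he.one_sub.mul_mul_self]
  noncomm_ring

theorem one_sub_mul_pow_succ_mul (he : IsIdempotentElem e) (L : R) (m : ℕ) :
    (1 - e) * L ^ (m + 1) * e
      = (1 - e) * L * e * (e * L ^ m * e) + (1 - e) * L * (1 - e) * ((1 - e) * L ^ m * e) := by
  rw [pow_succ', ← mul_assoc, mul_assoc _ (L ^ m), he.mul_eq_mul_mul_add_mul_mul ((1 - e) * L)]
  simp only [mul_assoc]

theorem mul_pow_succ_mul_one_sub (he : IsIdempotentElem e) (L : R) (n : ℕ) :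
    e * L ^ (n + 1) * (1 - e)
      = e * L ^ n * e * (e * L * (1 - e)) + e * L ^ n * (1 - e) * ((1 - e) * L * (1 - e)) := by
  rw [pow_succ, ← mul_assoc, mul_assoc _ L, he.mul_eq_mul_mul_add_mul_mul (e * L ^ n)]
  simp only [mul_assoc]

theorem mul_pow_mul_one_sub_mul_eq_zero (he : IsIdempotentElem e) (L : R) {Y : R}
    (h : ∀ k : ℕ, e * L * (1 - e) * ((1 - e) * L * (1 - e)) ^ k * Y = 0) (n : ℕ) :
    e * L ^ n * (1 - e) * Y = 0 := by
  induction n generalizing Y with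
  | zero => rw [pow_zero, mul_one, he.mul_one_sub_self, zero_mul]
  | succ n ih =>
    have hY : e * L * (1 - e) * Y = 0 := by simpa using h 0
    have hfY : ∀ k : ℕ,
        e * L * (1 - e) * ((1 - e) * L * (1 - e)) ^ k * ((1 - e) * L * (1 - e) * Y) = 0 :=
      fun k => by simpa only [pow_succ, mul_assoc] using h (k + 1)
    rw [he.mul_pow_succ_mul_one_sub, add_mul, mul_assoc, hY, mul_zero, zero_add, mul_assoc,
      ih hfY]

theorem mul_one_sub_mul_pow_mul_eq_zero (he : IsIdempotentElem e) (L : R) {X : R}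
    (h : ∀ k : ℕ, X * ((1 - e) * L * (1 - e)) ^ k * ((1 - e) * L * e) = 0) (m : ℕ) :
    X * ((1 - e) * L ^ m * e) = 0 := by
  induction m generalizing X with
  | zero => rw [pow_zero, mul_one, he.one_sub_mul_self, mul_zero]
  | succ m ih =>
    have hX : X * ((1 - e) * L * e) = 0 := by simpa using h 0
    have hXf : ∀ k : ℕ, X * ((1 - e) * L * (1 - e)) * ((1 - e) * L * (1 - e)) ^ k
        * ((1 - e) * L * e) = 0 :=
      fun k => by simpa only [pow_succ', mul_assoc] using h (k + 1)
    rw [he.one_sub_mul_pow_succ_mul, mul_add, ← mul_assoc, hX, zero_mul, zero_add, ← mul_assoc,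
      ih hXf]

theorem mul_one_sub_mul_pow_mul_eq_zero_of_forall (he : IsIdempotentElem e) (L : R)
    (h : ∀ n m : ℕ, e * L ^ n * (1 - e) * L ^ m * e = 0) (k m : ℕ) :
    e * L * (1 - e) * ((1 - e) * L * (1 - e)) ^ k * ((1 - e) * L ^ m * e) = 0 := by
  induction k generalizing m with
  | zero =>
    simpa only [pow_zero, pow_one, mul_one, ← mul_assoc, he.one_sub.mul_mul_self] using h 1 m
  | succ k ih =>
    have hfL : (1 - e) * L * (1 - e) * ((1 - e) * L ^ m * e)
        = (1 - e) * L ^ (m + 1) * e - (1 - e) * L * e * (e * L ^ m * e) := by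
      rw [he.one_sub_mul_pow_succ_mul, add_sub_cancel_left]
    have h₁ := ih 1
    rw [pow_one] at h₁
    calc e * L * (1 - e) * ((1 - e) * L * (1 - e)) ^ (k + 1) * ((1 - e) * L ^ m * e)
        = e * L * (1 - e) * ((1 - e) * L * (1 - e)) ^ k
            * ((1 - e) * L * (1 - e) * ((1 - e) * L ^ m * e)) := by
          simp only [pow_succ, mul_assoc]
      _ = 0 := by rw [hfL, mul_sub, ih, ← mul_assoc, h₁, zero_mul, sub_zero]

theorem forall_mul_pow_mul_one_sub_mul_pow_mul_eq_zero_iff (he : IsIdempotentElem e) (L : R) :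
    (∀ n m : ℕ, e * L ^ n * (1 - e) * L ^ m * e = 0) ↔
      ∀ k : ℕ, e * L * (1 - e) * ((1 - e) * L * (1 - e)) ^ k * ((1 - e) * L * e) = 0 := by
  refine ⟨fun h k => ?_, fun h n m => ?_⟩
  · simpa only [pow_one] using he.mul_one_sub_mul_pow_mul_eq_zero_of_forall L h k 1
  · have hY : e * L ^ n * (1 - e) * ((1 - e) * L ^ m * e) = e * L ^ n * (1 - e) * L ^ m * e := by
      simp only [← mul_assoc, he.one_sub.mul_mul_self]
    rw [← hY]
    refine he.mul_pow_mul_one_sub_mul_eq_zero L (fun k => ?_) n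
    exact he.mul_one_sub_mul_pow_mul_eq_zero L
      (fun k' => by simpa only [pow_add, mul_assoc] using h (k + k')) m

end IsIdempotentElem

namespace Module.End

variable {K M : Type*} [Field K] [AddCommGroup M] [Module K M] [FiniteDimensional K M]

theorem pow_mem_span_pow_lt_finrank (A : End K M) (j : ℕ) :
    A ^ j ∈ Submodule.span K ((A ^ ·) '' Set.Iio (finrank K M)) := by
  rw [LinearMap.pow_eq_aeval_mod_charpoly]
  set p := X ^ j %ₘ A.charpoly
  rcases eq_or_ne p 0 with hp | hp
  · simp [hp]
  have hdeg : p.natDegree < finrank K M := by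
    rw [natDegree_lt_iff_degree_lt hp, ← A.charpoly_natDegree,
      ← degree_eq_natDegree (Monic.ne_zero A.charpoly_monic)]
    exact degree_modByMonic_lt _ A.charpoly_monic
  rw [aeval_eq_sum_range' hdeg]
  exact Submodule.sum_mem _ fun i hi =>
    Submodule.smul_mem _ _ (Submodule.subset_span ⟨i, Finset.mem_range.mp hi, rfl⟩)

theorem map_pow_eq_zero_of_forall_lt_finrank {N : Type*} [AddCommGroup N] [Module K N]
    (A : End K M) (φ : End K M →ₗ[K] N) (h : ∀ i < finrank K M, φ (A ^ i) = 0) (j : ℕ) :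
    φ (A ^ j) = 0 := by
  have : Submodule.span K ((A ^ ·) '' Set.Iio (finrank K M)) ≤ LinearMap.ker φ :=
    Submodule.span_le.mpr (Set.image_subset_iff.mpr h)
  exact this (A.pow_mem_span_pow_lt_finrank j)

end Module.End

theorem LinearMap.comp_pow_comp_eq_zero_of_forall_lt_finrank {K U V W : Type*} [Field K]
    [AddCommGroup U] [Module K U] [AddCommGroup V] [Module K V] [AddCommGroup W] [Module K W]
    {C : Submodule K V} [FiniteDimensional K C] {A : End K V} (hA : ∀ x ∈ C, A x ∈ C)
    (X : V →ₗ[K] W) {Y : U →ₗ[K] V} (hY : range Y ≤ C)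
    (h : ∀ i < finrank K C, X ∘ₗ (A ^ i) ∘ₗ Y = 0) (j : ℕ) :
    X ∘ₗ (A ^ j) ∘ₗ Y = 0 := by
  let Y' : U →ₗ[K] C := Y.codRestrict C fun u => hY (mem_range_self Y u)
  let φ : End K C →ₗ[K] U →ₗ[K] W := (lcomp K W Y').comp (compRight K (X ∘ₗ C.subtype))
  have hφ : ∀ i, φ (A.restrict hA ^ i) = X ∘ₗ (A ^ i) ∘ₗ Y := fun i => by
    ext u
    simp [φ, Y', End.pow_restrict _ hA, LinearMap.restrict_apply]
  simpa only [hφ] using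
    End.map_pow_eq_zero_of_forall_lt_finrank (A.restrict hA) φ (by simpa only [hφ]) j

/-- `Δ L^n Δ⊥ L^{n'} Δ = 0` for all `n, n'` iff
`L_pc L_cc^j L_cp = 0` for all `j < ℓ`, where `ℓ = dim C` is the dimension of the
coherence subspace (the range of `Δ⊥ = 1 - Δ`). -/
theorem ncgd_iff_finitely_many (V : Type*) [AddCommGroup V] [Module ℂ V] [FiniteDimensional ℂ V]
    (L Δ : Module.End ℂ V) (hΔ : Δ * Δ = Δ) :
    (∀ n n' : ℕ, Δ * L ^ n * (1 - Δ) * L ^ n' * Δ = 0) ↔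
    (∀ j < Module.finrank ℂ (LinearMap.range (1 - Δ)),
      (Δ * L * (1 - Δ)) * ((1 - Δ) * L * (1 - Δ)) ^ j * ((1 - Δ) * L * Δ) = 0) := by
  have hA : ∀ x ∈ LinearMap.range (1 - Δ),
      ((1 - Δ) * L * (1 - Δ)) x ∈ LinearMap.range (1 - Δ) :=
    fun x _ => LinearMap.mem_range_self (1 - Δ) (L ((1 - Δ) x))
  have hY : LinearMap.range ((1 - Δ) * L * Δ) ≤ LinearMap.range (1 - Δ) := by
    rintro _ ⟨v, rfl⟩
    exact LinearMap.mem_range_self (1 - Δ) (L (Δ v))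
  rw [IsIdempotentElem.forall_mul_pow_mul_one_sub_mul_pow_mul_eq_zero_iff hΔ L]
  exact ⟨fun h j _ => h j,
    LinearMap.comp_pow_comp_eq_zero_of_forall_lt_finrank hA (Δ * L * (1 - Δ)) hY⟩
end

section
/- If L_cp = 0 (equivalently Δ⊥ ∘ L ∘ Δ = 0), then the dynamics generated by L is NCGD: Δ ∘ exp(tL) ∘ Δ⊥ ∘ exp(τL) ∘ Δ = 0 for all t, τ ≥ 0. -/
/-!
`Δ⊥ L Δ = 0` says that `L` is block upper triangular for `V = P ⊕ C`. Such operators form a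
closed subalgebra, which therefore contains `exp (τ L)`; hence `Δ⊥ exp (τ L) Δ = 0`, and the
NCGD expression vanishes already because of its last three factors.
-/

open NormedSpace

namespace IsIdempotentElem

variable {R A : Type*} [CommSemiring R] [Ring A] [Algebra R A] {e : A}

theorem mul_eq_mul_mul_of_compl_mul_mul_eq_zero {x : A} (hx : (1 - e) * x * e = 0) :
    x * e = e * x * e := by
  rwa [sub_mul, sub_mul, one_mul, sub_eq_zero] at hx

variable (R) in
/-- Left multiplication by its elements maps the right ideal `e * A` into itself. -/
def blockUpperTriangular (he : IsIdempotentElem e) : Subalgebra R A where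
  carrier := {x | (1 - e) * x * e = 0}
  mul_mem' {x y} hx hy := by
    change (1 - e) * x * e = 0 at hx
    calc (1 - e) * (x * y) * e = (1 - e) * x * (y * e) := by simp only [mul_assoc]
      _ = (1 - e) * x * (e * y * e) := by rw [← mul_eq_mul_mul_of_compl_mul_mul_eq_zero hy]
      _ = (1 - e) * x * e * (y * e) := by simp only [mul_assoc]
      _ = 0 := by rw [hx, zero_mul]
  add_mem' {x y} hx hy := by
    change (1 - e) * x * e = 0 at hx
    change (1 - e) * y * e = 0 at hy
    change (1 - e) * (x + y) * e = 0
    rw [mul_add, add_mul, hx, hy, add_zero]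
  algebraMap_mem' r := by
    change (1 - e) * algebraMap R A r * e = 0
    rw [← Algebra.commutes, mul_assoc, he.one_sub_mul_self, mul_zero]

theorem mem_blockUpperTriangular (he : IsIdempotentElem e) {x : A} :
    x ∈ he.blockUpperTriangular R ↔ (1 - e) * x * e = 0 :=
  Iff.rfl

theorem isClosed_blockUpperTriangular [TopologicalSpace A] [IsTopologicalRing A] [T1Space A]
    (he : IsIdempotentElem e) : IsClosed (he.blockUpperTriangular R : Set A) :=
  isClosed_eq (by fun_prop) continuous_const

end IsIdempotentElem

theorem Subalgebra.exp_mem {𝕂 A : Type*} [RCLike 𝕂] [NormedRing A] [NormedAlgebra 𝕂 A]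
    {s : Subalgebra 𝕂 A} (hs : IsClosed (s : Set A)) {x : A} (hx : x ∈ s) : exp x ∈ s := by
  rw [exp_eq_tsum 𝕂]
  exact tsum_mem hs fun n => s.smul_mem (pow_mem hx n) _

theorem IsIdempotentElem.compl_mul_exp_smul_mul_eq_zero {𝕂 A : Type*} [RCLike 𝕂] [NormedRing A]
    [NormedAlgebra 𝕂 A] {e x : A} (he : IsIdempotentElem e) (hx : (1 - e) * x * e = 0) (c : 𝕂) :
    (1 - e) * exp (c • x) * e = 0 :=
  Subalgebra.exp_mem he.isClosed_blockUpperTriangular <|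
    Subalgebra.smul_mem _ (he.mem_blockUpperTriangular.mpr hx) c

/-- if `L_cp = 0` then the dynamics generated by `L` is NCGD. -/
theorem cp_zero_implies_ncgd (d : ℕ)
    (L Δ : EuclideanSpace ℂ (Fin d) →L[ℂ] EuclideanSpace ℂ (Fin d)) (hΔ : Δ * Δ = Δ)
    (h : (1 - Δ) * L * Δ = 0) :
    ∀ t τ : ℝ, 0 ≤ t → 0 ≤ τ →
      Δ * NormedSpace.exp (t • L) * (1 - Δ) * NormedSpace.exp (τ • L) * Δ = 0 := by
  intro t τ _ _
  have hexp : (1 - Δ) * exp (τ • L) * Δ = 0 :=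
    Complex.coe_smul τ L ▸ IsIdempotentElem.compl_mul_exp_smul_mul_eq_zero hΔ h (τ : ℂ)
  simp only [mul_assoc] at hexp ⊢
  rw [hexp, mul_zero, mul_zero]
end

section
/- Under the hypothesis that L_pc ∘ L_cc^j ∘ L_cp = 0 for all j < n, one has the identity Δ ∘ L^{n+1} ∘ Δ⊥ ∘ L ∘ Δ = L_pc ∘ L_cc^n ∘ L_cp (as the pp block, all other blocks vanishing). -/
/-!
Inserting `1 = Δ + Δ⊥` between consecutive factors of `L` expands the `pc` block of `L ^ (k + 1)`
as the sum over `i + j = k` of `Δ L ^ i L_pc L_cc ^ j`. Multiplying on the right by `L_cp`, every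
summand with `j < n` contains a vanishing factor `L_pc L_cc ^ j L_cp`, leaving only `L_pc L_cc ^ n L_cp`.
-/

open Finset Finset.Nat

namespace IsIdempotentElem

variable {R : Type*} [Ring R] {p : R}

theorem one_sub_mul_one_sub_mul (hp : IsIdempotentElem p) (x : R) :
    (1 - p) * ((1 - p) * x) = (1 - p) * x := by
  rw [← mul_assoc, hp.one_sub.eq]

theorem mul_pow_succ_mul_one_sub_s17 (hp : IsIdempotentElem p) (L : R) (k : ℕ) :
    p * L ^ (k + 1) * (1 - p) =
      ∑ ij ∈ antidiagonal k,
        p * L ^ ij.1 * (p * L * (1 - p)) * ((1 - p) * L * (1 - p)) ^ ij.2 := by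
  induction k with
  | zero => simp [← mul_assoc, hp.eq]
  | succ k ih =>
    calc p * L ^ (k + 1 + 1) * (1 - p)
        = p * L ^ (k + 1) * p * L * (1 - p) + p * L ^ (k + 1) * (1 - p) * L * (1 - p) := by
          noncomm_ring
      _ = p * L ^ (k + 1) * (p * L * (1 - p)) * ((1 - p) * L * (1 - p)) ^ 0 +
            p * L ^ (k + 1) * (1 - p) * ((1 - p) * L * (1 - p)) := by
          simp only [pow_zero, mul_one, mul_assoc, hp.one_sub_mul_one_sub_mul]
      _ = _ := by
          rw [ih, sum_mul, sum_antidiagonal_succ']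
          simp only [pow_succ, mul_assoc]

theorem mul_pow_succ_mul_one_sub_mul_mul_eq (hp : IsIdempotentElem p) (L : R) {n : ℕ}
    (h : ∀ j < n, (p * L * (1 - p)) * ((1 - p) * L * (1 - p)) ^ j * ((1 - p) * L * p) = 0) :
    p * L ^ (n + 1) * (1 - p) * L * p =
      (p * L * (1 - p)) * ((1 - p) * L * (1 - p)) ^ n * ((1 - p) * L * p) := by
  have h_lt {ij : ℕ × ℕ} (hij : ij ∈ antidiagonal n) (hne : ij ≠ (0, n)) : ij.2 < n := by
    rw [HasAntidiagonal.mem_antidiagonal] at hij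
    by_contra! hge
    exact hne (Prod.ext (by omega) (by omega))
  calc p * L ^ (n + 1) * (1 - p) * L * p
      = p * L ^ (n + 1) * (1 - p) * ((1 - p) * L * p) := by
        simp only [mul_assoc, hp.one_sub_mul_one_sub_mul]
    _ = ∑ ij ∈ antidiagonal n,
          p * L ^ ij.1 *
            ((p * L * (1 - p)) * ((1 - p) * L * (1 - p)) ^ ij.2 * ((1 - p) * L * p)) := by
        rw [hp.mul_pow_succ_mul_one_sub_s17, sum_mul]
        simp only [mul_assoc]
    _ = p * L ^ 0 * ((p * L * (1 - p)) * ((1 - p) * L * (1 - p)) ^ n * ((1 - p) * L * p)) :=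
        sum_eq_single_of_mem (0, n) (by simp) fun ij hij hne => by rw [h _ (h_lt hij hne), mul_zero]
    _ = _ := by simp only [pow_zero, mul_one, ← mul_assoc, hp.eq]

end IsIdempotentElem

theorem backwards_key_step_general (V : Type*) [AddCommGroup V] [Module ℂ V]
    (L Δ : Module.End ℂ V) (hΔ : Δ * Δ = Δ) (n : ℕ)
    (h : ∀ j < n, (Δ * L * (1 - Δ)) * ((1 - Δ) * L * (1 - Δ)) ^ j * ((1 - Δ) * L * Δ) = 0) :
    Δ * L ^ (n + 1) * (1 - Δ) * L * Δ =
      (Δ * L * (1 - Δ)) * ((1 - Δ) * L * (1 - Δ)) ^ n * ((1 - Δ) * L * Δ) :=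
  IsIdempotentElem.mul_pow_succ_mul_one_sub_mul_mul_eq hΔ L h

/-- if `L_pc L_cc^j L_cp = 0` for all `j < n`, then
`Δ L^{n+1} Δ⊥ L Δ = L_pc L_cc^n L_cp`. -/
theorem backwards_key_step (V : Type*) [AddCommGroup V] [Module ℂ V] [FiniteDimensional ℂ V]
    (L Δ : Module.End ℂ V) (hΔ : Δ * Δ = Δ) (n : ℕ)
    (h : ∀ j < n, (Δ * L * (1 - Δ)) * ((1 - Δ) * L * (1 - Δ)) ^ j * ((1 - Δ) * L * Δ) = 0) :
    Δ * L ^ (n + 1) * (1 - Δ) * L * Δ =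
      (Δ * L * (1 - Δ)) * ((1 - Δ) * L * (1 - Δ)) ^ n * ((1 - Δ) * L * Δ) :=
  backwards_key_step_general V L Δ hΔ n h
end
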